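/- arXiv:1605.02165 — 2 statements merged into one kernel-verified Lean document; each statement's English description precedes it below -/
import Mathlib

section
/- Let α ∈ (0,1), β > 0 and a₁, a₂, b₁, b₂ ∈ ℝ. Then for every ω > 0, with τ = β·ln ω: Im P(iω)·Re Q(iω) − Re P(iω)·Im Q(iω) = (a₂ − a₁)·ω^α·sin(απ/2) + 2(b₂ − b₁)·ω^α·g(τ, π/2) + 2(a₂b₁ − a₁b₂)·ω^{2α}·sin(τ)·sinh(βπ/2). -/
/-- `φ_{a,b}(s) = 1 + a·s^α + b·(s^{α+iβ} + s^{α−iβ})`, with principal complex powers. -/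
noncomputable def phi (α β a b : ℝ) (s : ℂ) : ℂ :=
  1 + (a : ℂ) * s ^ (α : ℂ) +
    (b : ℂ) * (s ^ ((α : ℂ) + Complex.I * (β : ℂ)) + s ^ ((α : ℂ) - Complex.I * (β : ℂ)))

/-- `g(τ,φ) = cos τ · sin(αφ) · cosh(βφ) − sin τ · cos(αφ) · sinh(βφ)`. -/
noncomputable def g (α β τ φ : ℝ) : ℝ :=
  Real.cos τ * Real.sin (α * φ) * Real.cosh (β * φ) -
    Real.sin τ * Real.cos (α * φ) * Real.sinh (β * φ)

/-!
Since `s^(α ± iβ) = s^α · exp(± iβ log s)`, one has `φ_{a,b}(s) = 1 + s^α (a + 2b cos(β log s))`, and at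
`s = iω` this is `1 + ω^α e^{iαπ/2} (a + 2b cos(τ + iβπ/2))`. The left-hand side is `Im (P · conj Q)`;
for `P = 1 + r z₂`, `Q = 1 + r z₁` with `r` real it equals `r (Im z₂ - Im z₁) + r² Im (z₂ · conj z₁)`,
and in the last term the unimodular factor `e^{iαπ/2}` cancels, so only the cross terms `a₂b₁`, `a₁b₂`
survive.
-/

open Complex ComplexConjugate

lemma im_mul_conj (p q : ℂ) : (p * conj q).im = p.im * q.re - p.re * q.im := by
  simp only [mul_im, conj_re, conj_im]
  ring

lemma im_one_add_mul_mul_conj_one_add_mul (r : ℝ) (z w : ℂ) :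
    ((1 + r * z) * conj (1 + r * w)).im = r * (z.im - w.im) + r ^ 2 * (z * conj w).im := by
  simp only [mul_im, mul_re, add_re, add_im, one_re, one_im, ofReal_re, ofReal_im, conj_re, conj_im]
  ring

lemma im_mul_conj_of_norm_eq_one {u : ℂ} (hu : ‖u‖ = 1) (a₁ a₂ b₁ b₂ : ℝ) (w : ℂ) :
    (u * (a₂ + b₂ * w) * conj (u * (a₁ + b₁ * w))).im = (a₁ * b₂ - a₂ * b₁) * w.im := by
  have hu' : u * conj u = 1 := by
    rw [mul_conj, normSq_eq_norm_sq, hu]; norm_num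
  have hcancel : u * (a₂ + b₂ * w) * conj (u * (a₁ + b₁ * w)) = (a₂ + b₂ * w) * (a₁ + b₁ * conj w) := by
    simp only [map_mul, map_add, conj_ofReal]
    linear_combination (a₂ + b₂ * w) * (a₁ + b₁ * conj w) * hu'
  rw [hcancel]
  simp only [mul_im, mul_re, add_re, add_im, ofReal_re, ofReal_im, conj_re, conj_im]
  ring

lemma cpow_add_I_mul_add_cpow_sub_I_mul {s : ℂ} (hs : s ≠ 0) (x y : ℂ) :
    s ^ (x + I * y) + s ^ (x - I * y) = s ^ x * (2 * cos (y * log s)) := by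
  simp only [sub_eq_add_neg, cpow_add _ _ hs, two_cos, cpow_def_of_ne_zero hs]
  ring_nf

lemma phi_eq_one_add_cpow_mul (α β a b : ℝ) {s : ℂ} (hs : s ≠ 0) :
    phi α β a b s = 1 + s ^ (α : ℂ) * (a + b * (2 * cos (β * log s))) := by
  rw [phi, cpow_add_I_mul_add_cpow_sub_I_mul hs]
  ring

lemma log_I_mul_ofReal {ω : ℝ} (hω : 0 < ω) :
    log (I * ω) = Real.log ω + (Real.pi / 2 : ℝ) * I := by
  have harg : arg (I * ω) = Real.pi / 2 := by
    rw [mul_comm, arg_real_mul _ hω, arg_I]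
  apply Complex.ext <;> simp [log_re, log_im, harg, abs_of_pos hω]

lemma I_mul_ofReal_cpow {ω : ℝ} (hω : 0 < ω) (x : ℝ) :
    (I * ω) ^ (x : ℂ) = (ω ^ x : ℝ) * exp ((x * (Real.pi / 2) : ℝ) * I) := by
  rw [cpow_def_of_ne_zero (by simp [hω.ne']), log_I_mul_ofReal hω, ofReal_cpow hω.le,
    cpow_def_of_ne_zero (by exact_mod_cast hω.ne'), ← exp_add, ← ofReal_log hω.le]
  push_cast
  ring_nf

lemma phi_I_mul_ofReal (α β a b : ℝ) {ω : ℝ} (hω : 0 < ω) :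
    phi α β a b (I * ω) = 1 + (ω ^ α : ℝ) * (exp ((α * (Real.pi / 2) : ℝ) * I) *
      (a + b * (2 * cos ((β * Real.log ω : ℝ) + (β * (Real.pi / 2) : ℝ) * I)))) := by
  rw [phi_eq_one_add_cpow_mul _ _ _ _ (by simp [hω.ne']), I_mul_ofReal_cpow hω,
    log_I_mul_ofReal hω, mul_assoc]
  push_cast
  ring_nf

lemma im_cos_add_mul_I (x y : ℝ) : (cos (x + y * I)).im = -(Real.sin x * Real.sinh y) := by
  rw [cos_add_mul_I, ← ofReal_cos, ← ofReal_sin, ← ofReal_cosh, ← ofReal_sinh]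
  simp only [sub_im, mul_im, mul_re, ofReal_re, ofReal_im, I_re, I_im]
  ring

lemma im_exp_mul_I_mul_add_mul_two_cos (a b α β τ φ : ℝ) :
    (exp ((α * φ : ℝ) * I) * (a + b * (2 * cos (τ + (β * φ : ℝ) * I)))).im =
      a * Real.sin (α * φ) + 2 * b * g α β τ φ := by
  rw [cos_add_mul_I, g, ← ofReal_cos, ← ofReal_sin, ← ofReal_cosh, ← ofReal_sinh]
  simp only [mul_im, mul_re, add_re, add_im, sub_re, sub_im, exp_ofReal_mul_I_re,
    exp_ofReal_mul_I_im, ofReal_re, ofReal_im, I_re, I_im, re_ofNat, im_ofNat]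
  ring

theorem stmt_4_general (α β a₁ a₂ b₁ b₂ : ℝ) :
    ∀ ω : ℝ, 0 < ω →
      (phi α β a₂ b₂ (Complex.I * (ω : ℂ))).im * (phi α β a₁ b₁ (Complex.I * (ω : ℂ))).re -
        (phi α β a₂ b₂ (Complex.I * (ω : ℂ))).re * (phi α β a₁ b₁ (Complex.I * (ω : ℂ))).im =
      (a₂ - a₁) * ω ^ α * Real.sin (α * (Real.pi / 2)) +
        2 * (b₂ - b₁) * ω ^ α * g α β (β * Real.log ω) (Real.pi / 2) +
        2 * (a₂ * b₁ - a₁ * b₂) * ω ^ (2 * α) * Real.sin (β * Real.log ω) *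
          Real.sinh (β * (Real.pi / 2)) := by
  intro ω hω
  rw [← im_mul_conj, phi_I_mul_ofReal _ _ _ _ hω, phi_I_mul_ofReal _ _ _ _ hω,
    im_one_add_mul_mul_conj_one_add_mul, im_mul_conj_of_norm_eq_one (norm_exp_ofReal_mul_I _),
    im_exp_mul_I_mul_add_mul_two_cos, im_exp_mul_I_mul_add_mul_two_cos]
  simp only [mul_im, re_ofNat, im_ofNat, im_cos_add_mul_I]
  rw [mul_comm 2 α, Real.rpow_mul hω.le, Real.rpow_two]
  ring

/-- With `P = φ_{a₂,b₂}` and `Q = φ_{a₁,b₁}`, for every `ω > 0` and `τ = β·ln ω`: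
`Im P(iω)·Re Q(iω) − Re P(iω)·Im Q(iω) = (a₂−a₁)·ω^α·sin(απ/2) + 2(b₂−b₁)·ω^α·g(τ,π/2)
 + 2(a₂b₁−a₁b₂)·ω^{2α}·sin τ·sinh(βπ/2)`. -/
theorem stmt_4 (α β a₁ a₂ b₁ b₂ : ℝ) (hα : α ∈ Set.Ioo (0:ℝ) 1) (hβ : 0 < β) :
    ∀ ω : ℝ, 0 < ω →
      (phi α β a₂ b₂ (Complex.I * (ω : ℂ))).im * (phi α β a₁ b₁ (Complex.I * (ω : ℂ))).re -
        (phi α β a₂ b₂ (Complex.I * (ω : ℂ))).re * (phi α β a₁ b₁ (Complex.I * (ω : ℂ))).im =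
      (a₂ - a₁) * ω ^ α * Real.sin (α * (Real.pi / 2)) +
        2 * (b₂ - b₁) * ω ^ α * g α β (β * Real.log ω) (Real.pi / 2) +
        2 * (a₂ * b₁ - a₁ * b₂) * ω ^ (2 * α) * Real.sin (β * Real.log ω) *
          Real.sinh (β * (Real.pi / 2)) :=
  stmt_4_general α β a₁ a₂ b₁ b₂
end

section
/- Let α ∈ (0,1), β > 0 and let a > 0, b ≥ 0 satisfy a ≥ 2b·cosh(βπ/2)·√(1 + tan²(απ/2)·tanh²(βπ/2)). Then for every complex s with Re s ≥ 0 and s ≠ 0, Re φ_{a,b}(s) ≥ 1, while φ_{a,b}(0) = 1. -/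
/-- The constant `cosh(βπ/2)·√(1 + tan²(απ/2)·tanh²(βπ/2))` appearing in restrictions (T3). -/
noncomputable def Ctan (α β : ℝ) : ℝ :=
  Real.cosh (β * (Real.pi / 2)) *
    Real.sqrt (1 + (Real.tan (α * (Real.pi / 2)) * Real.tanh (β * (Real.pi / 2))) ^ 2)

/-!
Write `s = r e^{it}` with `|t| ≤ π/2` and `L = log r`. Then
`Re φ(s) = 1 + r^α (a cos αt + b (e^{-βt} cos(αt + βL) + e^{βt} cos(αt - βL)))`, and the bracket
multiplying `b` equals `2 (X cos βL + Y sin βL)` with `X = cosh βt cos αt`, `Y = sinh βt sin αt`.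
By Cauchy–Schwarz it is at most `2 √(X² + Y²) = 2 cos αt √(cosh² βt + tan² αt sinh² βt)`, and the
square root grows with `|t|`, so it is bounded by its value `Ctan α β` at `t = π/2`. Hence the
hypothesis on `a` makes the bracket multiplying `r^α` nonnegative.
-/

open Real

lemma abs_tan_eq_tan_abs {x : ℝ} (hx : |x| < π / 2) : |tan x| = tan |x| := by
  rcases abs_cases x with ⟨h, hx0⟩ | ⟨h, hx0⟩
  · rw [h, abs_of_nonneg (tan_nonneg_of_nonneg_of_le_pi_div_two hx0 (h ▸ hx.le))]
  · have := tan_nonneg_of_nonneg_of_le_pi_div_two (neg_nonneg.2 hx0.le) (h ▸ hx.le)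
    rw [tan_neg] at this
    rw [h, tan_neg, abs_of_nonpos (by linarith)]

lemma abs_tan_le_abs_tan {x y : ℝ} (hy : |y| < π / 2) (hxy : |x| ≤ |y|) :
    |tan x| ≤ |tan y| := by
  rw [abs_tan_eq_tan_abs (hxy.trans_lt hy), abs_tan_eq_tan_abs hy]
  have hpi : -(π / 2) < 0 := by linarith [pi_pos]
  exact strictMonoOn_tan.monotoneOn ⟨hpi.trans_le (abs_nonneg x), hxy.trans_lt hy⟩
    ⟨hpi.trans_le (abs_nonneg y), hy⟩ hxy

lemma abs_mul_lt_pi_div_two {α t : ℝ} (hα : |α| < 1) (ht : |t| ≤ π / 2) :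
    |α * t| < π / 2 := by
  rw [abs_mul]
  calc |α| * |t| ≤ |α| * (π / 2) := by gcongr
    _ < π / 2 := mul_lt_of_lt_one_left (by positivity) hα

lemma cos_mul_pos {α t : ℝ} (hα : |α| < 1) (ht : |t| ≤ π / 2) : 0 < cos (α * t) :=
  cos_pos_of_mem_Ioo (abs_lt.1 (abs_mul_lt_pi_div_two hα ht))

lemma Ctan_nonneg (α β : ℝ) : 0 ≤ Ctan α β := by
  unfold Ctan
  positivity

lemma Ctan_sq (α β : ℝ) :
    Ctan α β ^ 2 = cosh (β * (π / 2)) ^ 2 + tan (α * (π / 2)) ^ 2 * sinh (β * (π / 2)) ^ 2 := by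
  have hcosh := (cosh_pos (β * (π / 2))).ne'
  rw [Ctan, mul_pow, sq_sqrt (by positivity), tanh_eq_sinh_div_cosh]
  field_simp

lemma sq_cosh_add_sq_tan_mul_sq_sinh_le_Ctan_sq {α β t : ℝ} (hα : |α| < 1) (ht : |t| ≤ π / 2) :
    cosh (β * t) ^ 2 + tan (α * t) ^ 2 * sinh (β * t) ^ 2 ≤ Ctan α β ^ 2 := by
  have hpi : |π / 2| = π / 2 := abs_of_pos (by positivity)
  have hcosh : cosh (β * t) ^ 2 ≤ cosh (β * (π / 2)) ^ 2 := by
    refine pow_le_pow_left₀ (cosh_pos _).le (cosh_le_cosh.2 ?_) 2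
    rw [abs_mul, abs_mul, hpi]
    gcongr
  have hsinh : sinh (β * t) ^ 2 ≤ sinh (β * (π / 2)) ^ 2 := by
    linarith [cosh_sq (β * t), cosh_sq (β * (π / 2))]
  have htan : tan (α * t) ^ 2 ≤ tan (α * (π / 2)) ^ 2 := by
    rw [← sq_abs, ← sq_abs (tan _)]
    refine pow_le_pow_left₀ (abs_nonneg _)
      (abs_tan_le_abs_tan (abs_mul_lt_pi_div_two hα hpi.le) ?_) 2
    rw [abs_mul, abs_mul, hpi]
    gcongr
  rw [Ctan_sq]
  exact add_le_add hcosh (mul_le_mul htan hsinh (sq_nonneg _) (sq_nonneg _))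

lemma abs_exp_mul_cos_add_exp_mul_cos_le {α β t : ℝ} (hα : |α| < 1) (ht : |t| ≤ π / 2) (v : ℝ) :
    |exp (-(β * t)) * cos (α * t + v) + exp (β * t) * cos (α * t - v)|
      ≤ 2 * Ctan α β * cos (α * t) := by
  have hcos := cos_mul_pos hα ht
  set X := cosh (β * t) * cos (α * t)
  set Y := sinh (β * t) * sin (α * t)
  have hE : exp (-(β * t)) * cos (α * t + v) + exp (β * t) * cos (α * t - v)
      = 2 * (X * cos v + Y * sin v) := by
    simp only [X, Y, cos_add, cos_sub, cosh_eq, sinh_eq]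
    ring
  have hCS : (X * cos v + Y * sin v) ^ 2 ≤ X ^ 2 + Y ^ 2 := by
    nlinarith [sq_nonneg (X * sin v - Y * cos v), sin_sq_add_cos_sq v]
  have hXY : X ^ 2 + Y ^ 2
      = cos (α * t) ^ 2 * (cosh (β * t) ^ 2 + tan (α * t) ^ 2 * sinh (β * t) ^ 2) := by
    have hcos2 : cos (α * t) ^ 2 ≠ 0 := pow_ne_zero 2 hcos.ne'
    simp only [X, Y, tan_eq_sin_div_cos, div_pow]
    rw [mul_add, ← mul_assoc, mul_div_cancel₀ _ hcos2]
    ring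
  rw [hE, abs_mul, abs_two, mul_assoc 2 (Ctan α β)]
  refine mul_le_mul_of_nonneg_left
    (abs_le_of_sq_le_sq ?_ (mul_nonneg (Ctan_nonneg α β) hcos.le)) zero_le_two
  calc (X * cos v + Y * sin v) ^ 2 ≤ X ^ 2 + Y ^ 2 := hCS
    _ ≤ cos (α * t) ^ 2 * Ctan α β ^ 2 := by
      rw [hXY]
      gcongr
      exact sq_cosh_add_sq_tan_mul_sq_sinh_le_Ctan_sq hα ht
    _ = (Ctan α β * cos (α * t)) ^ 2 := by ring

lemma re_cpow_ofReal_add_I_mul {s : ℂ} (hs : s ≠ 0) (x y : ℝ) :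
    (s ^ ((x : ℂ) + Complex.I * y)).re
      = exp (x * log ‖s‖ - y * s.arg) * cos (x * s.arg + y * log ‖s‖) := by
  rw [Complex.cpow_def_of_ne_zero hs, Complex.exp_re]
  simp only [Complex.mul_re, Complex.mul_im, Complex.add_re, Complex.add_im, Complex.log_re,
    Complex.log_im, Complex.ofReal_re, Complex.ofReal_im, Complex.I_re, Complex.I_im]
  ring_nf

lemma re_phi {s : ℂ} (hs : s ≠ 0) (α β a b : ℝ) :
    (phi α β a b s).re = 1 + exp (α * log ‖s‖) * (a * cos (α * s.arg)
      + b * (exp (-(β * s.arg)) * cos (α * s.arg + β * log ‖s‖)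
        + exp (β * s.arg) * cos (α * s.arg - β * log ‖s‖))) := by
  have h0 := re_cpow_ofReal_add_I_mul hs α 0
  have h1 := re_cpow_ofReal_add_I_mul hs α β
  have h2 := re_cpow_ofReal_add_I_mul hs α (-β)
  simp only [Complex.ofReal_zero, mul_zero, add_zero, zero_mul, sub_zero] at h0
  simp only [Complex.ofReal_neg, mul_neg, ← sub_eq_add_neg, neg_mul, sub_neg_eq_add] at h2
  simp only [phi, Complex.add_re, Complex.one_re, Complex.re_ofReal_mul, h0, h1, h2, exp_sub,
    exp_add, exp_neg]
  ring

lemma phi_zero {α : ℝ} (hα : α ≠ 0) (β a b : ℝ) : phi α β a b 0 = 1 := by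
  have hne : ∀ y : ℝ, (α : ℂ) + Complex.I * y ≠ 0 := fun y h =>
    hα (by simpa using congrArg Complex.re h)
  have hne' : (α : ℂ) - Complex.I * β ≠ 0 := by simpa [sub_eq_add_neg] using hne (-β)
  simp [phi, Complex.zero_cpow, hne β, hne', hα]

theorem stmt_16_general (α β a b : ℝ) (hα : α ∈ Set.Ioo (0:ℝ) 1)
    (hb : 0 ≤ b) (hT3 : a ≥ 2 * b * Ctan α β) :
    (∀ s : ℂ, 0 ≤ s.re → s ≠ 0 → 1 ≤ (phi α β a b s).re) ∧ phi α β a b 0 = 1 := by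
  refine ⟨fun s hre hs => ?_, phi_zero hα.1.ne' β a b⟩
  have ht : |s.arg| ≤ π / 2 := Complex.abs_arg_le_pi_div_two_iff.2 hre
  have hα' : |α| < 1 := abs_lt.2 ⟨by linarith [hα.1], hα.2⟩
  have hcos := (cos_mul_pos hα' ht).le
  set E := exp (-(β * s.arg)) * cos (α * s.arg + β * log ‖s‖)
    + exp (β * s.arg) * cos (α * s.arg - β * log ‖s‖)
  have hE : |E| ≤ 2 * Ctan α β * cos (α * s.arg) :=
    abs_exp_mul_cos_add_exp_mul_cos_le hα' ht _
  have hbracket : 0 ≤ a * cos (α * s.arg) + b * E :=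
    calc 0 ≤ (a - 2 * b * Ctan α β) * cos (α * s.arg) := mul_nonneg (sub_nonneg.2 hT3) hcos
      _ = a * cos (α * s.arg) + b * -(2 * Ctan α β * cos (α * s.arg)) := by ring
      _ ≤ a * cos (α * s.arg) + b * E := by gcongr; exact (neg_le_neg hE).trans (neg_abs_le E)
  rw [re_phi hs]
  exact le_add_of_nonneg_right (mul_nonneg (exp_pos _).le hbracket)

/-- If `a > 0`, `b ≥ 0` and `a ≥ 2b·cosh(βπ/2)·√(1 + tan²(απ/2)·tanh²(βπ/2))`, then for
every complex `s ≠ 0` with `Re s ≥ 0` one has `Re φ_{a,b}(s) ≥ 1`, while `φ_{a,b}(0) = 1`. -/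
theorem stmt_16 (α β a b : ℝ) (hα : α ∈ Set.Ioo (0:ℝ) 1) (hβ : 0 < β)
    (ha : 0 < a) (hb : 0 ≤ b) (hT3 : a ≥ 2 * b * Ctan α β) :
    (∀ s : ℂ, 0 ≤ s.re → s ≠ 0 → 1 ≤ (phi α β a b s).re) ∧ phi α β a b 0 = 1 :=
  stmt_16_general α β a b hα hb hT3
end
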